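/- arXiv:1410.7710 — 4 statements merged into one kernel-verified Lean document; each statement's English description precedes it below -/
import Mathlib

section
/- Let G be a reductive group acting on P(V) × P(W) via representations ρ: G → GL(V) and σ: G → GL(W). A point (x,y) is asymptotically (semi-)stable (i.e., for every nontrivial one-parameter subgroup λ of G there is M > 0 such that μ_ρ(λ,x) + m·μ_σ(λ,y) (≥) 0 for all m ≥ M) if and only if every nontrivial one-parameter subgroup λ of G satisfies: (1) μ_σ(λ,y) ≥ 0, and (2) if μ_σ(λ,y) = 0 then μ_ρ(λ,x) (≥) 0. -/
lemma aux_le (a b : ℝ) :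
    (∃ M : ℝ, 0 < M ∧ ∀ m : ℝ, M ≤ m → 0 ≤ a + m * b) ↔ (0 ≤ b ∧ (b = 0 → 0 ≤ a)) := by
  constructor
  · rintro ⟨M, hM, h⟩
    constructor
    · by_contra hb
      push_neg at hb
      have hm := h (max M ((a + 1) / (-b))) (le_max_left _ _)
      have h2 : (a + 1) / (-b) ≤ max M ((a + 1) / (-b)) := le_max_right _ _
      have hb' : 0 < -b := by linarith
      rw [div_le_iff₀ hb'] at h2
      nlinarith
    · intro hb
      have := h M le_rfl
      simpa [hb] using this
  · rintro ⟨hb, h0⟩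
    rcases eq_or_lt_of_le hb with hb0 | hb0
    · refine ⟨1, one_pos, fun m _ => ?_⟩
      have := h0 hb0.symm
      nlinarith [hb0]
    · refine ⟨max 1 ((|a| + 1) / b), lt_of_lt_of_le one_pos (le_max_left _ _), fun m hm => ?_⟩
      have h2 : (|a| + 1) / b ≤ m := le_trans (le_max_right _ _) hm
      rw [div_le_iff₀ hb0] at h2
      have := neg_abs_le a
      nlinarith

lemma aux_lt (a b : ℝ) :
    (∃ M : ℝ, 0 < M ∧ ∀ m : ℝ, M ≤ m → 0 < a + m * b) ↔ (0 ≤ b ∧ (b = 0 → 0 < a)) := by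
  constructor
  · rintro ⟨M, hM, h⟩
    constructor
    · by_contra hb
      push_neg at hb
      have hm := h (max M ((a + 1) / (-b))) (le_max_left _ _)
      have h2 : (a + 1) / (-b) ≤ max M ((a + 1) / (-b)) := le_max_right _ _
      have hb' : 0 < -b := by linarith
      rw [div_le_iff₀ hb'] at h2
      nlinarith
    · intro hb
      have := h M le_rfl
      simpa [hb] using this
  · rintro ⟨hb, h0⟩
    rcases eq_or_lt_of_le hb with hb0 | hb0
    · refine ⟨1, one_pos, fun m _ => ?_⟩
      have := h0 hb0.symm
      nlinarith [hb0]
    · refine ⟨max 1 ((|a| + 1) / b), lt_of_lt_of_le one_pos (le_max_left _ _), fun m hm => ?_⟩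
      have h2 : (|a| + 1) / b ≤ m := le_trans (le_max_right _ _) hm
      rw [div_le_iff₀ hb0] at h2
      have := neg_abs_le a
      nlinarith

/-- A point (x,y) in P(V)×P(W) is asymptotically (semi-)stable iff every
nontrivial one-parameter subgroup λ satisfies μ_σ(λ,y) ≥ 0 and
(μ_σ(λ,y) = 0 → μ_ρ(λ,x) (≥) 0).  Here `Λ` is the set of nontrivial one-parameter
subgroups of the reductive group G, and `μρ l`, `μσ l` are the Hilbert–Mumford weights
of l at the fixed points x ∈ P(V) and y ∈ P(W). -/
theorem stmt_1 {Λ : Type*} (μρ μσ : Λ → ℝ) :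
    ((∀ l : Λ, ∃ M : ℝ, 0 < M ∧ ∀ m : ℝ, M ≤ m → 0 ≤ μρ l + m * μσ l) ↔
      ∀ l : Λ, 0 ≤ μσ l ∧ (μσ l = 0 → 0 ≤ μρ l)) ∧
    ((∀ l : Λ, ∃ M : ℝ, 0 < M ∧ ∀ m : ℝ, M ≤ m → 0 < μρ l + m * μσ l) ↔
      ∀ l : Λ, 0 ≤ μσ l ∧ (μσ l = 0 → 0 < μρ l)) := by
  exact ⟨forall_congr' fun l => aux_le _ _, forall_congr' fun l => aux_lt _ _⟩
end

section
/- Let P₁ and Q₁ be nonempty compact subsets of a finite-dimensional real inner product space, and let χ, χ_σ be linear functionals such that ⟨χ_σ, l₁⟩ = 0 for all l₁ ∈ P₁, ⟨χ_σ, l₂⟩ < 0 for all l₂ ∈ Q₁, and every element of P₁ is nonzero. Define N(t, l₁, l₂) = -⟨χ_σ, (1-t)l₁ + t l₂⟩ / ‖(1-t)l₁ + t l₂‖. Then the partial derivative ∂N/∂t at t = 0 equals -⟨χ_σ, l₂⟩/‖l₁‖ > 0, and there exists ε > 0 such that ∂N/∂t (t, l₁, l₂) > 0 for all t ∈ [0,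 ε], l₁ ∈ P₁, l₂ ∈ Q₁. -/
/-!
Because `χσ l₁ = 0`, along the segment `v t = (1 - t) • l₁ + t • l₂` we have
`N t = -t χσ(l₂) / ‖v t‖`, whose derivative is `-χσ(l₂) ⟪v t, l₁⟫ / ‖v t‖³`.
At `t = 0` the inner product is `‖l₁‖² > 0`; it is jointly continuous in `(t, l₁, l₂)`,
so by compactness of `P × Q` it stays positive for `t ∈ [0, ε]`, and the sign of the
derivative is that of `-χσ(l₂) > 0`.
-/

open Set Filter Topology RealInnerProductSpace

theorem HasDerivAt.norm {F : Type*} [NormedAddCommGroup F] [InnerProductSpace ℝ F]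
    {f : ℝ → F} {f' : F} {x : ℝ} (hf : HasDerivAt f f' x) (h0 : f x ≠ 0) :
    HasDerivAt (‖f ·‖) (⟪f x, f'⟫ / ‖f x‖) x := by
  have hpos : 0 < ‖f x‖ := norm_pos_iff.mpr h0
  have h := hf.norm_sq.sqrt (by positivity)
  simp only [Real.sqrt_sq (norm_nonneg _)] at h
  convert h using 1
  field_simp

theorem exists_pos_forall_Icc_of_isCompact {X : Type*} [TopologicalSpace X] {K : Set X}
    (hK : IsCompact K) {f : ℝ → X → ℝ} (hf : Continuous (Function.uncurry f))
    (h0 : ∀ x ∈ K, 0 < f 0 x) : ∃ ε > 0, ∀ t ∈ Icc 0 ε, ∀ x ∈ K, 0 < f t x := by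
  have hev : ∀ᶠ t in 𝓝 0, ∀ x ∈ K, 0 < f t x :=
    hK.eventually_forall_of_forall_eventually fun x hx =>
      continuousAt_const.eventually_lt hf.continuousAt (h0 x hx)
  obtain ⟨δ, hδ, hball⟩ := Metric.eventually_nhds_iff_ball.mp hev
  refine ⟨δ / 2, half_pos hδ, fun t ht => hball t ?_⟩
  rw [Metric.mem_ball, Real.dist_0_eq_abs, abs_of_nonneg ht.1]
  linarith [ht.2]

section Segment

variable {E : Type*} [NormedAddCommGroup E] [InnerProductSpace ℝ E]

theorem hasDerivAt_div_norm_segment (l₁ l₂ : E) {t : ℝ} (h : (1 - t) • l₁ + t • l₂ ≠ 0) :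
    HasDerivAt (fun s : ℝ => s / ‖(1 - s) • l₁ + s • l₂‖)
      (⟪(1 - t) • l₁ + t • l₂, l₁⟫ / ‖(1 - t) • l₁ + t • l₂‖ ^ 3) t := by
  set v : ℝ → E := fun s => (1 - s) • l₁ + s • l₂
  have hv : HasDerivAt v (l₂ - l₁) t := by
    have := ((hasDerivAt_id t).smul_const (l₂ - l₁)).const_add l₁
    convert this using 1
    · ext s; simp only [v, id]; module
    · simp
  have hpos : 0 < ‖v t‖ := norm_pos_iff.mpr h
  refine ((hasDerivAt_id t).div (hv.norm h) hpos.ne').congr_deriv ?_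
  have hinner : ⟪v t, l₁⟫ = ‖v t‖ ^ 2 - t * ⟪v t, l₂ - l₁⟫ := by
    rw [← real_inner_self_eq_norm_sq, ← real_inner_smul_right, ← inner_sub_right]
    congr 1
    simp only [v]
    module
  change _ = ⟪v t, l₁⟫ / ‖v t‖ ^ 3
  rw [hinner, id]
  field_simp

theorem deriv_neg_div_norm_segment {χ : E →ₗ[ℝ] ℝ} {l₁ : E} (hl₁ : χ l₁ = 0) (l₂ : E) {t : ℝ}
    (h : (1 - t) • l₁ + t • l₂ ≠ 0) :
    deriv (fun s : ℝ => -χ ((1 - s) • l₁ + s • l₂) / ‖(1 - s) • l₁ + s • l₂‖) t =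
      -χ l₂ * (⟪(1 - t) • l₁ + t • l₂, l₁⟫ / ‖(1 - t) • l₁ + t • l₂‖ ^ 3) := by
  have hfun : (fun s : ℝ => -χ ((1 - s) • l₁ + s • l₂) / ‖(1 - s) • l₁ + s • l₂‖) =
      fun s => -χ l₂ * (s / ‖(1 - s) • l₁ + s • l₂‖) := by
    ext s
    rw [map_add, map_smul, map_smul, hl₁, smul_eq_mul, smul_eq_mul]
    ring
  rw [hfun]
  exact ((hasDerivAt_div_norm_segment l₁ l₂ h).const_mul _).deriv

end Segment

theorem stmt_2_general {E : Type*} [NormedAddCommGroup E] [InnerProductSpace ℝ E]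
    (P Q : Set E) (hPc : IsCompact P) (hQc : IsCompact Q)
    (χσ : E →ₗ[ℝ] ℝ)
    (hP0 : ∀ l₁ ∈ P, χσ l₁ = 0)
    (hQneg : ∀ l₂ ∈ Q, χσ l₂ < 0)
    (hPnz : ∀ l₁ ∈ P, l₁ ≠ 0)
    (N : ℝ → E → E → ℝ)
    (hN : ∀ t l₁ l₂, N t l₁ l₂ = -χσ ((1 - t) • l₁ + t • l₂) / ‖(1 - t) • l₁ + t • l₂‖) :
    (∀ l₁ ∈ P, ∀ l₂ ∈ Q,
        deriv (fun t => N t l₁ l₂) 0 = -χσ l₂ / ‖l₁‖ ∧ 0 < deriv (fun t => N t l₁ l₂) 0) ∧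
    ∃ ε > (0 : ℝ), ∀ t ∈ Icc (0 : ℝ) ε, ∀ l₁ ∈ P, ∀ l₂ ∈ Q,
      0 < deriv (fun s => N s l₁ l₂) t := by
  have hNfun : ∀ l₁ l₂, (fun s => N s l₁ l₂) =
      fun s => -χσ ((1 - s) • l₁ + s • l₂) / ‖(1 - s) • l₁ + s • l₂‖ :=
    fun l₁ l₂ => funext fun s => hN s l₁ l₂
  obtain ⟨ε, hε, hinner⟩ := exists_pos_forall_Icc_of_isCompact (hPc.prod hQc)
    (f := fun t l => ⟪(1 - t) • l.1 + t • l.2, l.1⟫) (by fun_prop)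
    fun l hl => by
      simpa only [sub_zero, one_smul, zero_smul, add_zero, real_inner_self_pos] using hPnz l.1 hl.1
  refine ⟨fun l₁ hl₁ l₂ hl₂ => ?_, ε, hε, fun t ht l₁ hl₁ l₂ hl₂ => ?_⟩
  · have hl₁0 := hPnz l₁ hl₁
    have hval : deriv (fun t => N t l₁ l₂) 0 = -χσ l₂ / ‖l₁‖ := by
      rw [hNfun, deriv_neg_div_norm_segment (hP0 l₁ hl₁) l₂ (by simpa using hl₁0)]
      simp only [sub_zero, one_smul, zero_smul, add_zero, real_inner_self_eq_norm_sq]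
      have : 0 < ‖l₁‖ := norm_pos_iff.mpr hl₁0
      field_simp
    exact ⟨hval, hval ▸ div_pos (neg_pos.mpr (hQneg l₂ hl₂)) (norm_pos_iff.mpr hl₁0)⟩
  · have hpos := hinner t ht (l₁, l₂) ⟨hl₁, hl₂⟩
    have hne : (1 - t) • l₁ + t • l₂ ≠ 0 := fun h => by simp [h] at hpos
    rw [hNfun, deriv_neg_div_norm_segment (hP0 l₁ hl₁) l₂ hne]
    exact mul_pos (neg_pos.mpr (hQneg l₂ hl₂)) (div_pos hpos (by positivity))

/-- For nonempty compact sets P₁, Q₁ in a finite-dimensional real inner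
product space, a linear functional χσ vanishing on P₁, negative on Q₁, with 0 ∉ P₁, and
N(t,l₁,l₂) = -χσ((1-t)l₁+tl₂)/‖(1-t)l₁+tl₂‖, the t-derivative of N at 0 equals
-χσ(l₂)/‖l₁‖ > 0, and there is ε > 0 with ∂N/∂t > 0 on [0,ε] × P₁ × Q₁. -/
theorem stmt_2 {E : Type*} [NormedAddCommGroup E] [InnerProductSpace ℝ E]
    [FiniteDimensional ℝ E]
    (P Q : Set E) (hPc : IsCompact P) (hQc : IsCompact Q)
    (hPne : P.Nonempty) (hQne : Q.Nonempty)
    (χσ : E →ₗ[ℝ] ℝ)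
    (hP0 : ∀ l₁ ∈ P, χσ l₁ = 0)
    (hQneg : ∀ l₂ ∈ Q, χσ l₂ < 0)
    (hPnz : ∀ l₁ ∈ P, l₁ ≠ 0)
    (N : ℝ → E → E → ℝ)
    (hN : ∀ t l₁ l₂, N t l₁ l₂ = -χσ ((1 - t) • l₁ + t • l₂) / ‖(1 - t) • l₁ + t • l₂‖) :
    (∀ l₁ ∈ P, ∀ l₂ ∈ Q,
        deriv (fun t => N t l₁ l₂) 0 = -χσ l₂ / ‖l₁‖ ∧ 0 < deriv (fun t => N t l₁ l₂) 0) ∧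
    ∃ ε > (0 : ℝ), ∀ t ∈ Icc (0 : ℝ) ε, ∀ l₁ ∈ P, ∀ l₂ ∈ Q,
      0 < deriv (fun s => N s l₁ l₂) t :=
  stmt_2_general P Q hPc hQc χσ hP0 hQneg hPnz N hN
end

section
/- Let λ: K* → SL(r) be a one-parameter subgroup over a field K with associated weighted flag (W_•, α) of length m in K^r, and let x = [Φ, E] ∈ P(End(K^r)^∨ ⊕ K) be a point given by an endomorphism Φ of K^r and a scalar E, not both zero, where SL(r) acts on End(K^r) by conjugation and trivially on K. Then μ(λ, x) < 0 if and only if E = 0 and Φ(W_i) ⊆ W_{i-1} for all i = 1,...,m+1 (with W_0 = 0 and W_{m+1} = K^r). -/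
open Finset

/-- For a one-parameter subgroup λ of SL(r) with associated weighted flag
(W_•,α) of length m (with W 0 = ⊥ and W (m+1) = K^r), and a point
x = [Φ, E] ∈ P(End(K^r)^∨ ⊕ K) (Φ and Esc not both zero), where
γ_i = Σ_{j=1}^m α_j dim W_j − Σ_{j=i}^m α_j r,
μ(λ,[Φ]) = max{γ_i − γ_j : Φ(W_j) ⊄ W_{i−1}} (computed in WithBot ℚ, the max over the
empty set being ⊥, which occurs only for Φ = 0 where the K-component forces μ = 0), and
μ(λ,x) = μ(λ,[Φ]) if Esc = 0 and max(μ(λ,[Φ]),0) otherwise: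
μ(λ,x) < 0  ↔  Esc = 0 and Φ(W_i) ⊆ W_{i−1} for all i = 1,…,m+1. -/
theorem stmt_3 {K : Type*} [Field K] (r m : ℕ)
    (W : ℕ → Submodule K (Fin r → K))
    (hW0 : W 0 = ⊥) (hWtop : W (m + 1) = ⊤)
    (hWlt : ∀ i ≤ m, W i < W (i + 1))
    (α : ℕ → ℚ) (hα : ∀ j ∈ Icc 1 m, 0 < α j)
    (Φ : (Fin r → K) →ₗ[K] (Fin r → K)) (Esc : K)
    (hx : Φ ≠ 0 ∨ Esc ≠ 0) [Decidable (Esc = 0)]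
    [DecidablePred fun p : ℕ × ℕ => Submodule.map Φ (W p.2) ≤ W (p.1 - 1)]
    (γ : ℕ → ℚ)
    (hγ : ∀ i, γ i = (∑ j ∈ Icc 1 m, α j * (Module.finrank K (W j) : ℚ))
        - ∑ j ∈ Icc i m, α j * (r : ℚ))
    (μΦ : WithBot ℚ)
    (hμΦ : μΦ = ((Icc 1 (m + 1)) ×ˢ (Icc 1 (m + 1))).sup
        (fun p => if Submodule.map Φ (W p.2) ≤ W (p.1 - 1) then (⊥ : WithBot ℚ)
          else ((γ p.1 - γ p.2 : ℚ) : WithBot ℚ)))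
    (μ : WithBot ℚ)
    (hμ : μ = if Esc = 0 then μΦ else max μΦ 0) :
    μ < 0 ↔ Esc = 0 ∧ ∀ i ∈ Icc 1 (m + 1), Submodule.map Φ (W i) ≤ W (i - 1) := by
  have hr : 0 < r := by
    by_contra h
    have hr0 : r = 0 := by omega
    subst hr0
    have hlt := hWlt 0 (Nat.zero_le m)
    exact absurd (Subsingleton.elim (W 0) (W 1)) hlt.ne
  have hmono : ∀ i ≤ m + 1, ∀ j ≤ i, W j ≤ W i := by
    intro i
    induction i with
    | zero =>
      intro _ j hj
      have : j = 0 := by omega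
      subst this; exact le_rfl
    | succ n ih =>
      intro hn j hj
      rcases Nat.lt_or_ge j (n + 1) with h | h
      · exact (ih (by omega) j (by omega)).trans (hWlt n (by omega)).le
      · have : j = n + 1 := by omega
        subst this; exact le_rfl
  have hγlt : ∀ i j : ℕ, 1 ≤ i → i < j → j ≤ m + 1 → γ i - γ j < 0 := by
    intro i j hi hij hj
    rw [hγ i, hγ j]
    have e1 : Icc i m = Ico i (m + 1) := (Finset.Ico_add_one_right_eq_Icc i m).symm
    have e2 : Icc j m = Ico j (m + 1) := (Finset.Ico_add_one_right_eq_Icc j m).symm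
    have hsplit := Finset.sum_Ico_consecutive (fun k => α k * (r : ℚ))
      (le_of_lt hij) hj
    have hpos : 0 < ∑ k ∈ Ico i j, α k * (r : ℚ) := by
      apply Finset.sum_pos
      · intro k hk
        rw [Finset.mem_Ico] at hk
        have : 0 < α k := hα k (Finset.mem_Icc.mpr ⟨by omega, by omega⟩)
        positivity
      · exact Finset.nonempty_Ico.mpr hij
    rw [e1, e2]
    linarith [hsplit]
  have main : μΦ < 0 ↔ ∀ i ∈ Icc 1 (m + 1), Submodule.map Φ (W i) ≤ W (i - 1) := by
    constructor
    · intro h i hi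
      by_contra hc
      have hmem : (i, i) ∈ (Icc 1 (m + 1)) ×ˢ (Icc 1 (m + 1)) :=
        Finset.mem_product.mpr ⟨hi, hi⟩
      have hle := Finset.le_sup (f := fun p : ℕ × ℕ =>
        if Submodule.map Φ (W p.2) ≤ W (p.1 - 1) then (⊥ : WithBot ℚ)
        else ((γ p.1 - γ p.2 : ℚ) : WithBot ℚ)) hmem
      simp only [if_neg hc] at hle
      rw [hμΦ] at h
      have : ((γ i - γ i : ℚ) : WithBot ℚ) < 0 := lt_of_le_of_lt hle h
      simp at this
    · intro hkey
      rw [hμΦ]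
      rw [Finset.sup_lt_iff (show (⊥ : WithBot ℚ) < 0 by exact bot_lt_iff_ne_bot.mpr (by simp))]
      intro p hp
      rw [Finset.mem_product, Finset.mem_Icc, Finset.mem_Icc] at hp
      obtain ⟨⟨hi1, hi2⟩, hj1, hj2⟩ := hp
      split_ifs with hc
      · exact bot_lt_iff_ne_bot.mpr (by simp)
      · have hij : p.1 < p.2 := by
          by_contra hge
          apply hc
          have h1 : Submodule.map Φ (W p.2) ≤ W (p.2 - 1) :=
            hkey p.2 (Finset.mem_Icc.mpr ⟨hj1, hj2⟩)
          exact h1.trans (hmono (p.1 - 1) (by omega) (p.2 - 1) (by omega))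
        have := hγlt p.1 p.2 hi1 hij hj2
        exact_mod_cast this
  rw [hμ]
  split_ifs with hE
  · rw [main]
    exact ⟨fun h => ⟨hE, h⟩, fun h => h.2⟩
  · constructor
    · intro h
      exact absurd (lt_of_le_of_lt (le_max_right μΦ 0) h) (by simp)
    · intro ⟨h, _⟩
      exact absurd h hE
end

section
/- With the setup of the previous lemma (λ a one-parameter subgroup of SL(r) with weighted flag (W_•, α), x = [Φ, E] ∈ P(End(K^r)^∨ ⊕ K)): μ(λ, x) > 0 if and only if the flag W_• is not Φ-invariant, i.e., there exists an index j with Φ(W_j) ⊄ W_j. -/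
open Finset

/-- For a one-parameter subgroup λ of SL(r) with associated weighted flag
(W_•,α) of length m (with W 0 = ⊥ and W (m+1) = K^r), and a point
x = [Φ, E] ∈ P(End(K^r)^∨ ⊕ K) (Φ and Esc not both zero), where
γ_i = Σ_{j=1}^m α_j dim W_j − Σ_{j=i}^m α_j r,
μ(λ,[Φ]) = max{γ_i − γ_j : Φ(W_j) ⊄ W_{i−1}} (computed in WithBot ℚ, the max over the
empty set being ⊥, which occurs only for Φ = 0 where the K-component forces μ = 0), and
μ(λ,x) = μ(λ,[Φ]) if Esc = 0 and max(μ(λ,[Φ]),0) otherwise: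
STATEMENT 4: μ(λ,x) > 0  ↔  the flag W_• is not Φ-invariant, i.e. there is an index
j ∈ {1,…,m} with Φ(W_j) ⊄ W_j. -/
theorem stmt_4 {K : Type*} [Field K] (r m : ℕ)
    (W : ℕ → Submodule K (Fin r → K))
    (hW0 : W 0 = ⊥) (hWtop : W (m + 1) = ⊤)
    (hWlt : ∀ i ≤ m, W i < W (i + 1))
    (α : ℕ → ℚ) (hα : ∀ j ∈ Icc 1 m, 0 < α j)
    (Φ : (Fin r → K) →ₗ[K] (Fin r → K)) (Esc : K)
    (hx : Φ ≠ 0 ∨ Esc ≠ 0) [Decidable (Esc = 0)]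
    [DecidablePred fun p : ℕ × ℕ => Submodule.map Φ (W p.2) ≤ W (p.1 - 1)]
    (γ : ℕ → ℚ)
    (hγ : ∀ i, γ i = (∑ j ∈ Icc 1 m, α j * (Module.finrank K (W j) : ℚ))
        - ∑ j ∈ Icc i m, α j * (r : ℚ))
    (μΦ : WithBot ℚ)
    (hμΦ : μΦ = ((Icc 1 (m + 1)) ×ˢ (Icc 1 (m + 1))).sup
        (fun p => if Submodule.map Φ (W p.2) ≤ W (p.1 - 1) then (⊥ : WithBot ℚ)
          else ((γ p.1 - γ p.2 : ℚ) : WithBot ℚ)))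
    (μ : WithBot ℚ)
    (hμ : μ = if Esc = 0 then μΦ else max μΦ 0) :
    0 < μ ↔ ∃ j ∈ Icc 1 m, ¬ Submodule.map Φ (W j) ≤ W j := by

  -- W is monotone up to m+1
  have hWmono : ∀ a b, a ≤ b → b ≤ m + 1 → W a ≤ W b := by
    intro a b hab hb
    induction b with
    | zero => have : a = 0 := by omega
              simp [this]
    | succ n ih =>
      rcases Nat.eq_or_lt_of_le hab with h | h
      · simp [h]
      · exact (ih (by omega) (by omega)).trans (hWlt n (by omega)).le
  -- γ is monotone on [1, ∞)
  have hγmono : ∀ a b, 1 ≤ a → a ≤ b → γ a ≤ γ b := by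
    intro a b h1 hab
    rw [hγ a, hγ b]
    have hsum : ∑ j ∈ Icc b m, α j * (r : ℚ) ≤ ∑ j ∈ Icc a m, α j * (r : ℚ) := by
      apply Finset.sum_le_sum_of_subset_of_nonneg (Finset.Icc_subset_Icc_left hab)
      intro j hj _
      have hjm := Finset.mem_Icc.mp hj
      exact mul_nonneg (hα j (Finset.mem_Icc.mpr ⟨by omega, hjm.2⟩)).le (by positivity)
    linarith
  -- r > 0
  have hr : 0 < r := by
    rcases Nat.eq_zero_or_pos r with h0 | h
    · exfalso
      subst h0
      exact (hWlt 0 (Nat.zero_le m)).ne (Subsingleton.elim _ _)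
    · exact h
  -- gap formula
  have hgap : ∀ j, 1 ≤ j → j ≤ m → γ (j + 1) - γ j = α j * r := by
    intro j h1 hm
    rw [hγ (j + 1), hγ j]
    have hins : Icc j m = insert j (Icc (j + 1) m) := by
      ext x; simp only [Finset.mem_Icc, Finset.mem_insert]; omega
    rw [hins, Finset.sum_insert (by simp [Finset.mem_Icc])]
    ring
  constructor
  · intro hpos
    have hμΦ0 : 0 < μΦ := by
      rw [hμ] at hpos
      split at hpos
      · exact hpos
      · rcases lt_max_iff.mp hpos with h | h
        · exact h
        · exact absurd h (lt_irrefl 0)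
    rw [hμΦ, Finset.lt_sup_iff] at hμΦ0
    obtain ⟨p, hp, hfp⟩ := hμΦ0
    rw [Finset.mem_product, Finset.mem_Icc, Finset.mem_Icc] at hp
    split_ifs at hfp with hcond
    · exact absurd hfp not_lt_bot
    · have hγlt : γ p.2 < γ p.1 := by
        have h0 : (0 : ℚ) < γ p.1 - γ p.2 := by exact_mod_cast hfp
        exact sub_pos.mp h0
      have hp21 : p.2 < p.1 := by
        by_contra hle
        push_neg at hle
        exact absurd (hγmono p.1 p.2 hp.1.1 hle) (not_le.mpr hγlt)
      refine ⟨p.2, Finset.mem_Icc.mpr ⟨hp.2.1, by omega⟩, fun hc => hcond ?_⟩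
      exact hc.trans (hWmono p.2 (p.1 - 1) (by omega) (by omega))
  · rintro ⟨j, hj, hΦj⟩
    rw [Finset.mem_Icc] at hj
    have hmem : ((j + 1, j) : ℕ × ℕ) ∈ (Icc 1 (m + 1)) ×ˢ (Icc 1 (m + 1)) := by
      simp only [Finset.mem_product, Finset.mem_Icc]; omega
    have hle := Finset.le_sup (f := fun p : ℕ × ℕ =>
        if Submodule.map Φ (W p.2) ≤ W (p.1 - 1) then (⊥ : WithBot ℚ)
          else ((γ p.1 - γ p.2 : ℚ) : WithBot ℚ)) hmem
    simp only at hle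
    rw [if_neg (show ¬Submodule.map Φ (W j) ≤ W (j + 1 - 1) from hΦj)] at hle
    rw [← hμΦ] at hle
    have hposq : (0 : ℚ) < γ (j + 1) - γ j := by
      rw [hgap j hj.1 hj.2]
      exact mul_pos (hα j (Finset.mem_Icc.mpr hj)) (by exact_mod_cast hr)
    have hpos : (0 : WithBot ℚ) < μΦ :=
      lt_of_lt_of_le (by exact_mod_cast hposq) hle
    rw [hμ]
    split
    · exact hpos
    · exact lt_max_iff.mpr (Or.inl hpos)
end
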